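/- For every real α > 2 and every ε > 0, there exist positive integers r, s, t with s ≥ 3 such that the word obtained by deleting the first t letters of μ^s(0) begins with 00, and the rational β = r − t/2^s satisfies β < α and α − β < ε. -/

import Mathlib

/-!
`μ³(0) = 01101001` and `μ³(1) = 10010110` both contain `00` (at offsets 5 and 1), so in
`μ^(n+3)(0) = μ³(μⁿ(0))` the factor `00` begins strictly inside each of the `2ⁿ` blocks of
length 8. Hence the starting positions `t` of `00` in `μ^s(0)` are spread with gaps below 16,
and `t / 2^s` can be placed in any interval `(r - α, r - α + ε)` with `r = ⌈α⌉` once `s` is large.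
-/

/-- Thue–Morse morphism: 0 ↦ 01, 1 ↦ 10 (false = 0, true = 1). -/
def mu : List Bool → List Bool :=
  fun w => w.flatMap (fun b => if b then [true, false] else [false, true])

/-- `w` has period `p`: `w[i] = w[i+p]` whenever both defined. -/
def HasPeriod (w : List Bool) (p : ℕ) : Prop :=
  ∀ i, i + p < w.length → w[i]? = w[i + p]?

/-- `w` is α-power-free: no factor `u` has a period `p` with `|u|/p ≥ α`. -/
def PowerFree (α : ℝ) (w : List Bool) : Prop :=
  ∀ u p, u <:+: w → 0 < p → HasPeriod u p → (u.length : ℝ) / p < α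

/-- `𝓛`: factors of images of `mu`. -/
def InL (w : List Bool) : Prop := ∃ x, w <:+: mu x

lemma mu_append (a b : List Bool) : mu (a ++ b) = mu a ++ mu b :=
  List.flatMap_append

lemma mu_iterate_append (m : ℕ) (a b : List Bool) :
    mu^[m] (a ++ b) = mu^[m] a ++ mu^[m] b := by
  induction m generalizing a b with
  | zero => rfl
  | succ m ih => rw [Function.iterate_succ_apply, Function.iterate_succ_apply,
      Function.iterate_succ_apply, mu_append, ih]

lemma length_mu (w : List Bool) : (mu w).length = 2 * w.length := by
  induction w with
  | nil => rfl
  | cons b w ih =>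
    rw [← List.singleton_append, mu_append, List.length_append, ih]
    cases b <;> simp [mu] <;> ring

lemma length_mu_iterate (m : ℕ) (w : List Bool) : (mu^[m] w).length = 2 ^ m * w.length := by
  induction m generalizing w with
  | zero => simp
  | succ m ih => rw [Function.iterate_succ_apply, ih, length_mu]; ring

lemma exists_zero_zero_prefix_drop_mu_iterate_three_singleton (b : Bool) :
    ∃ j, 0 < j ∧ j < 8 ∧ [false, false] <+: (mu^[3] [b]).drop j := by
  cases b
  · exact ⟨5, by decide, by decide, by decide⟩
  · exact ⟨1, by decide, by decide, by decide⟩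

lemma exists_zero_zero_prefix_drop_mu_iterate_three (w : List Bool) (k : ℕ) (hk : k < w.length) :
    ∃ t, 8 * k < t ∧ t < 8 * k + 8 ∧ [false, false] <+: (mu^[3] w).drop t := by
  obtain ⟨j, hj0, hj8, hpre⟩ := exists_zero_zero_prefix_drop_mu_iterate_three_singleton w[k]
  have hsplit : mu^[3] w = mu^[3] (w.take k) ++ (mu^[3] [w[k]] ++ mu^[3] (w.drop (k + 1))) := by
    rw [← mu_iterate_append, ← mu_iterate_append, List.singleton_append,
      List.getElem_cons_drop hk, List.take_append_drop]
  have hblock : (mu^[3] (w.take k)).length = 8 * k := by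
    rw [length_mu_iterate, List.length_take, Nat.min_eq_left hk.le]; rfl
  have hblock_b : j ≤ (mu^[3] [w[k]]).length := by
    rw [length_mu_iterate, List.length_singleton]; omega
  refine ⟨8 * k + j, by omega, by omega, ?_⟩
  rw [hsplit, ← hblock, List.drop_length_add_append, List.drop_append_of_le_length hblock_b]
  exact hpre.trans (List.prefix_append _ _)

lemma exists_dyadic_block_in_interval {γ ε : ℝ} (hγ0 : 0 ≤ γ) (hγ1 : γ < 1) (hε : 0 < ε) :
    ∃ n k : ℕ, k < 2 ^ n ∧ γ * 2 ^ n ≤ k ∧ (k + 1 : ℝ) ≤ (γ + ε) * 2 ^ n := by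
  set δ := min ε (1 - γ)
  have hδ : 0 < δ := lt_min hε (by linarith)
  obtain ⟨n, hn⟩ := pow_unbounded_of_one_lt (2 / δ) (one_lt_two (α := ℝ))
  have h2n : 2 < δ * 2 ^ n := by rwa [div_lt_iff₀' hδ] at hn
  have hδε : δ ≤ ε := min_le_left _ _
  have hδγ : δ ≤ 1 - γ := min_le_right _ _
  have hpow : (0 : ℝ) < 2 ^ n := by positivity
  set k := ⌈γ * 2 ^ n⌉₊
  have hk_ge : γ * 2 ^ n ≤ k := Nat.le_ceil _
  have hk_lt : (k : ℝ) < γ * 2 ^ n + 1 := Nat.ceil_lt_add_one (by positivity)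
  refine ⟨n, k, ?_, hk_ge, by nlinarith⟩
  have : (k : ℝ) < 2 ^ n := by nlinarith
  exact_mod_cast this

theorem obtainable_dense (α : ℝ) (hα : 2 < α) (ε : ℝ) (hε : 0 < ε) :
    ∃ r s t : ℕ, 0 < r ∧ 3 ≤ s ∧ 0 < t ∧
      [false, false] <+: (mu^[s] [false]).drop t ∧
      (r : ℝ) - t / 2 ^ s < α ∧ α - ((r : ℝ) - t / 2 ^ s) < ε := by
  set r := ⌈α⌉₊
  have hr_ge : α ≤ r := Nat.le_ceil α
  have hr_lt : (r : ℝ) < α + 1 := Nat.ceil_lt_add_one (by linarith)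
  obtain ⟨n, k, hk, hk_ge, hk_le⟩ :=
    exists_dyadic_block_in_interval (γ := r - α) (by linarith) (by linarith) hε
  have hk_len : k < (mu^[n] [false]).length := by simpa [length_mu_iterate] using hk
  obtain ⟨t, ht_gt, ht_lt, hpre⟩ :=
    exists_zero_zero_prefix_drop_mu_iterate_three _ k hk_len
  have hiter : mu^[n + 3] [false] = mu^[3] (mu^[n] [false]) := by
    rw [Nat.add_comm, Function.iterate_add_apply]
  have hpow : (0 : ℝ) < 2 ^ (n + 3) := by positivity
  have ht_gt' : (r - α : ℝ) < t / 2 ^ (n + 3) := by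
    rw [lt_div_iff₀ hpow, pow_add]
    have : (8 * k : ℝ) < t := by exact_mod_cast ht_gt
    nlinarith
  have ht_lt' : (t / 2 ^ (n + 3) : ℝ) < r - α + ε := by
    rw [div_lt_iff₀ hpow, pow_add]
    have : (t : ℝ) < 8 * k + 8 := by exact_mod_cast ht_lt
    nlinarith
  refine ⟨r, n + 3, t, Nat.ceil_pos.2 (by linarith), by omega, by omega, hiter ▸ hpre, ?_, ?_⟩
  <;> linarith
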